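/- Let k, k′ > 0 and let σ : ℝ → ℂ be measurable. Let r_j′ = (x_j′, y_j′) (1 ≤ j ≤ M_s) be source points with strengths Q_j′ ∈ ℂ, let c′ = (x_c′, y_c′) be a source expansion center with (ρ_j′, θ_j′) the polar coordinates of r_j′ − c′, and let r_i = (x_i, y_i) be a target point. Define the multipole coefficients α_n = Σ_{j=1}^{M_s} Q_j′·J_n(k′ρ_j′)·e^{inθ_j′}. Assume that for each j and n the function λ ↦ 𝓔^{k′k}(x_c′ − x_i, y_c′, y_i)·ω(λ,k′)^n·σ(λ) is integrable and that Σ_{n∈ℤ} |J_n(k′ρ_j′)|·∫_ℝ |𝓔^{k′k}(x_c′ − x_i, y_c′, y_i)·ω(λ,k′)^n·σ(λ)| dλ < ∞ for each j. Then the potential Φ⁺(r_i, σ) = Σ_{j=1}^{M_s} Q_j′·𝓘^{k′k}_{00}(x_j′ − x_i, y_j′, y_i, σ) admits the absolutely convergent multipole expansion Φ⁺(r_i, σ) = Σ_{n∈ℤ} α_n·𝓘^{k′k}_{n0}(x_c′ − x_i, y_c′, y_i, σ). -/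

import Mathlib

open Complex MeasureTheory Filter

/-- The branch of the vertical wavenumber: κ(λ,k) = √(k²−λ²) if |λ| ≤ k,
and κ(λ,k) = i√(λ²−k²) if |λ| > k. -/
noncomputable def kappa (lam k : ℝ) : ℂ :=
  if |lam| ≤ k then ((Real.sqrt (k ^ 2 - lam ^ 2) : ℝ) : ℂ)
  else Complex.I * ((Real.sqrt (lam ^ 2 - k ^ 2) : ℝ) : ℂ)

/-- ω(λ,k) = (κ(λ,k) + iλ)/k. -/
noncomputable def omega (lam k : ℝ) : ℂ := (kappa lam k + Complex.I * (lam : ℂ)) / (k : ℂ)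

/-- The plane-wave kernel 𝓔^{kk′}(x, y, y′) = exp(iλx + iκ(λ,k)y − iκ(λ,k′)y′). -/
noncomputable def pwKernel (k k' lam x y y' : ℝ) : ℂ :=
  Complex.exp (Complex.I * (lam : ℂ) * (x : ℂ) + Complex.I * kappa lam k * (y : ℂ)
    - Complex.I * kappa lam k' * (y' : ℂ))

/-- Bessel function of the first kind of nonnegative integer order, via its power series. -/
noncomputable def besselJnat (n : ℕ) (z : ℂ) : ℂ :=
  ∑' m : ℕ, ((-1 : ℂ) ^ m / ((m.factorial : ℂ) * ((m + n).factorial : ℂ))) * (z / 2) ^ (2 * m + n)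

/-- Bessel function of the first kind of integer order, with J_{−n} = (−1)^n J_n. -/
noncomputable def besselJ (n : ℤ) (z : ℂ) : ℂ :=
  if 0 ≤ n then besselJnat n.toNat z else (-1 : ℂ) ^ ((-n).toNat) * besselJnat ((-n).toNat) z

/-- Integrand of the Sommerfeld-type integral 𝓘^{kk′}_{nm}. -/
noncomputable def sommerfeldIntegrand (k k' : ℝ) (n m : ℤ) (x y y' : ℝ) (σ : ℝ → ℂ)
    (lam : ℝ) : ℂ :=
  pwKernel k k' lam x y y' * (omega lam k) ^ n * (omega lam k') ^ m * σ lam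

/-- The Sommerfeld-type integral 𝓘^{kk′}_{nm}(x, y, y′, σ). -/
noncomputable def sommerfeld (k k' : ℝ) (n m : ℤ) (x y y' : ℝ) (σ : ℝ → ℂ) : ℂ :=
  ∫ lam : ℝ, sommerfeldIntegrand k k' n m x y y' σ lam

lemma kappa_sq {lam k : ℝ} (hk : 0 < k) : (kappa lam k) ^ 2 = (k : ℂ) ^ 2 - (lam : ℂ) ^ 2 := by
  unfold kappa
  split_ifs with h
  · rw [← Complex.ofReal_pow, Real.sq_sqrt (by nlinarith [_root_.sq_abs lam, abs_nonneg lam] : (0:ℝ) ≤ k^2 - lam^2)]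
    push_cast; ring
  · push_neg at h
    rw [mul_pow, Complex.I_sq, ← Complex.ofReal_pow,
      Real.sq_sqrt (by nlinarith [_root_.sq_abs lam] : (0:ℝ) ≤ lam^2 - k^2)]
    push_cast; ring

lemma omega_mul {lam k : ℝ} (hk : 0 < k) :
    omega lam k * ((kappa lam k - Complex.I * lam) / k) = 1 := by
  have h := kappa_sq (lam := lam) hk
  have hk0 : (k : ℂ) ≠ 0 := by exact_mod_cast hk.ne'
  rw [omega, div_mul_div_comm, div_eq_one_iff_eq (mul_ne_zero hk0 hk0)]
  linear_combination h - (lam:ℂ)^2 * Complex.I_sq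

lemma omega_ne_zero {lam k : ℝ} (hk : 0 < k) : omega lam k ≠ 0 :=
  left_ne_zero_of_mul_eq_one (omega_mul hk)

lemma omega_inv {lam k : ℝ} (hk : 0 < k) :
    (omega lam k)⁻¹ = (kappa lam k - Complex.I * lam) / k :=
  inv_eq_of_mul_eq_one_right (omega_mul hk)

/-- auxiliary equivalence ℤ × ℕ ≃ ℕ × ℕ -/
def zEquivAux : ℤ × ℕ ≃ ℕ × ℕ where
  toFun p := (p.2 + p.1.toNat, p.2 + (-p.1).toNat)
  invFun q := ((q.1 : ℤ) - q.2, min q.1 q.2)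
  left_inv := by rintro ⟨n, m⟩; refine Prod.ext ?_ ?_ <;> simp <;> omega
  right_inv := by rintro ⟨p, q⟩; refine Prod.ext ?_ ?_ <;> simp <;> omega

noncomputable def sigEquivAux : (Σ _ : ℤ, ℕ) ≃ ℕ × ℕ :=
  (Equiv.sigmaEquivProd ℤ ℕ).trans zEquivAux

lemma besselJ_hasSum (z t : ℂ) (ht : t ≠ 0) :
    HasSum (fun n : ℤ => besselJ n z * t ^ n) (Complex.exp (z / 2 * (t - t⁻¹))) := by
  have hg : HasSum (fun p : ℕ => (z * t / 2) ^ p / p.factorial) (Complex.exp (z * t / 2)) := by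
    rw [Complex.exp_eq_exp_ℂ]; exact NormedSpace.expSeries_div_hasSum_exp (z * t / 2)
  have hh : HasSum (fun q : ℕ => (-z / (2 * t)) ^ q / q.factorial)
      (Complex.exp (-z / (2 * t))) := by
    rw [Complex.exp_eq_exp_ℂ]; exact NormedSpace.expSeries_div_hasSum_exp (-z / (2 * t))
  set F : ℕ × ℕ → ℂ :=
    fun pq => ((z * t / 2) ^ pq.1 / pq.1.factorial) * ((-z / (2 * t)) ^ pq.2 / pq.2.factorial)
    with hFdef
  have hFs : Summable F := by
    apply Summable.of_norm
    have := Summable.mul_of_nonneg (NormedSpace.norm_expSeries_div_summable (z * t / 2))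
      (NormedSpace.norm_expSeries_div_summable (-z / (2 * t)))
      (fun _ => norm_nonneg _) (fun _ => norm_nonneg _)
    simpa [hFdef, norm_mul] using this
  have hF : HasSum F (Complex.exp (z / 2 * (t - t⁻¹))) := by
    have h1 := hg.mul hh hFs
    have h2 : Complex.exp (z * t / 2) * Complex.exp (-z / (2 * t))
        = Complex.exp (z / 2 * (t - t⁻¹)) := by
      rw [← Complex.exp_add]; congr 1; field_simp; ring
    rwa [h2] at h1
  have hFe : HasSum (F ∘ sigEquivAux) (Complex.exp (z / 2 * (t - t⁻¹))) :=
    (Equiv.hasSum_iff sigEquivAux).mpr hF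
  refine HasSum.sigma hFe (fun n => ?_)
  -- fiber sum
  have hsm : Summable (fun m : ℕ => (F ∘ sigEquivAux) ⟨n, m⟩) :=
    ((Equiv.summable_iff sigEquivAux).mpr hFs).comp_injective sigma_mk_injective
  set b : ℕ → ℂ := fun m =>
    ((-1 : ℂ) ^ m / ((m.factorial : ℂ) * ((m + n.natAbs).factorial : ℂ))) * (z / 2) ^ (2 * m + n.natAbs)
    with hbdef
  set C : ℂ := (if 0 ≤ n then (1 : ℂ) else (-1 : ℂ) ^ n.natAbs) * t ^ n with hCdef
  have hfac : ∀ m : ℕ, ((m.factorial : ℂ)) ≠ 0 :=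
    fun m => Nat.cast_ne_zero.mpr (Nat.factorial_ne_zero m)
  have hkey : ∀ m : ℕ, (F ∘ sigEquivAux) ⟨n, m⟩ = b m * C := by
    intro m
    by_cases hn : 0 ≤ n
    · lift n to ℕ using hn with N
      have h1 : ((N : ℤ)).toNat = N := rfl
      have h2 : (-(N : ℤ)).toNat = 0 := by omega
      have h3 : ((N : ℤ)).natAbs = N := rfl
      simp only [hFdef, hbdef, hCdef, Function.comp, sigEquivAux, zEquivAux,
        Equiv.trans_apply, Equiv.sigmaEquivProd, Equiv.coe_fn_mk, h1, h2, h3,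
        if_pos (by exact_mod_cast Nat.zero_le N : (0:ℤ) ≤ N), one_mul, add_zero,
        zpow_natCast]
      show (z * t / 2) ^ (m + N) / ((m + N).factorial : ℂ)
          * ((-z / (2 * t)) ^ m / (m.factorial : ℂ)) = _
      have htm : t ^ m * t⁻¹ ^ m = 1 := by
        rw [← mul_pow, mul_inv_cancel₀ ht, one_pow]
      have e1 : (z * t / 2) ^ (m + N) = (z/2)^m * (z/2)^N * (t^m * t^N) := by
        rw [show z * t / 2 = z/2 * t by ring, mul_pow, pow_add, pow_add]
      have e2 : (-z / (2 * t)) ^ m = (-1:ℂ)^m * (z/2)^m * t⁻¹^m := by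
        rw [show -z / (2*t) = (-1) * (z/2) * t⁻¹ by field_simp, mul_pow, mul_pow]
      have e3 : (z/2)^(2*m+N) = (z/2)^m * ((z/2)^m * (z/2)^N) := by
        rw [show 2*m+N = m+(m+N) by omega, pow_add, pow_add]
      rw [e1, e2, e3]
      linear_combination ((z/2)^m * (z/2)^N * (z/2)^m * (-1:ℂ)^m * t^N /
        ((m.factorial : ℂ) * ((m+N).factorial : ℂ))) * htm
    · have hN : n = -(n.natAbs : ℤ) := by omega
      set N := n.natAbs with hNdef
      have h1 : n.toNat = 0 := by omega
      have h2 : (-n).toNat = N := by omega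
      have htn : t ^ n = (t ^ N)⁻¹ := by
        rw [hN, zpow_neg, zpow_natCast]
      simp only [hFdef, hbdef, hCdef, Function.comp, sigEquivAux, zEquivAux,
        Equiv.trans_apply, Equiv.sigmaEquivProd, Equiv.coe_fn_mk, h1, h2,
        if_neg hn, add_zero, htn]
      show (z * t / 2) ^ m / ((m).factorial : ℂ)
          * ((-z / (2 * t)) ^ (m + N) / ((m + N).factorial : ℂ)) = _
      have htm : t ^ m * t⁻¹ ^ m = 1 := by
        rw [← mul_pow, mul_inv_cancel₀ ht, one_pow]
      have e1 : (z * t / 2) ^ m = (z/2)^m * t^m := by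
        rw [show z * t / 2 = z/2 * t by ring, mul_pow]
      have e2 : (-z / (2 * t)) ^ (m + N) = (-1:ℂ)^m * (-1:ℂ)^N * ((z/2)^m * (z/2)^N)
          * (t⁻¹^m * t⁻¹^N) := by
        rw [show -z / (2*t) = (-1) * (z/2) * t⁻¹ by field_simp, mul_pow, mul_pow,
          pow_add, pow_add, pow_add]
      have e3 : (z/2)^(2*m+N) = (z/2)^m * ((z/2)^m * (z/2)^N) := by
        rw [show 2*m+N = m+(m+N) by omega, pow_add, pow_add]
      rw [e1, e2, e3, ← inv_pow]
      linear_combination ((z/2)^m * (z/2)^N * (z/2)^m * (-1:ℂ)^m * (-1:ℂ)^N * t⁻¹^N /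
        ((m.factorial : ℂ) * ((m+N).factorial : ℂ))) * htm
  have htsum : ∑' m, (F ∘ sigEquivAux) ⟨n, m⟩ = besselJnat n.natAbs z * C := by
    simp_rw [hkey]
    rw [tsum_mul_right]
    rfl
  have hfinal : besselJnat n.natAbs z * C = besselJ n z * t ^ n := by
    rw [hCdef, besselJ]
    split_ifs with hn
    · have : n.toNat = n.natAbs := by omega
      rw [this]; ring
    · have : (-n).toNat = n.natAbs := by omega
      rw [this]; ring
  have := hsm.hasSum
  rwa [htsum, hfinal] at this

lemma kernel_hasSum (k k' lam : ℝ) (hk' : 0 < k') (ρ θ xj yj xc yc xi yi : ℝ)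
    (hx : xj - xc = ρ * Real.cos θ) (hy : yj - yc = ρ * Real.sin θ) :
    HasSum (fun n : ℤ => besselJ n ((k' * ρ : ℝ) : ℂ) * Complex.exp (Complex.I * n * θ)
        * (pwKernel k' k lam (xc - xi) yc yi * omega lam k' ^ n))
      (pwKernel k' k lam (xj - xi) yj yi) := by
  have hk0 : (k' : ℂ) ≠ 0 := by exact_mod_cast hk'.ne'
  set κ := kappa lam k' with hκdef
  set t : ℂ := omega lam k' * Complex.exp (Complex.I * θ) with htdef
  have hω : omega lam k' ≠ 0 := omega_ne_zero hk'
  have ht : t ≠ 0 := mul_ne_zero hω (Complex.exp_ne_zero _)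
  have htinv : t⁻¹ = ((κ - Complex.I * lam) / k') * Complex.exp (-(Complex.I * θ)) := by
    rw [htdef, mul_inv, omega_inv hk', ← Complex.exp_neg]
  have hexpθ : Complex.exp (Complex.I * θ) = (Real.cos θ : ℂ) + (Real.sin θ : ℂ) * Complex.I := by
    rw [mul_comm, Complex.exp_mul_I, Complex.ofReal_cos, Complex.ofReal_sin]
  have hexpθ' : Complex.exp (-(Complex.I * θ)) = (Real.cos θ : ℂ) - (Real.sin θ : ℂ) * Complex.I := by
    rw [show -(Complex.I * θ) = (-θ : ℝ) * Complex.I by push_cast; ring, Complex.exp_mul_I,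
      Complex.ofReal_cos, Complex.ofReal_sin]
    push_cast
    rw [Complex.cos_neg, Complex.sin_neg]
    ring
  have harg : ((k' * ρ : ℝ) : ℂ) / 2 * (t - t⁻¹)
      = Complex.I * lam * ((ρ : ℂ) * Real.cos θ) + Complex.I * κ * ((ρ : ℂ) * Real.sin θ) := by
    rw [htinv, htdef, omega, ← hκdef, hexpθ, hexpθ']
    push_cast
    field_simp
    ring
  have hker : pwKernel k' k lam (xj - xi) yj yi
      = pwKernel k' k lam (xc - xi) yc yi * Complex.exp (((k' * ρ : ℝ) : ℂ) / 2 * (t - t⁻¹)) := by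
    rw [harg, pwKernel, pwKernel, ← Complex.exp_add]
    congr 1
    have hx' : (xj : ℂ) - xc = (ρ : ℂ) * Real.cos θ := by exact_mod_cast congrArg (Complex.ofReal) hx
    have hy' : (yj : ℂ) - yc = (ρ : ℂ) * Real.sin θ := by exact_mod_cast congrArg (Complex.ofReal) hy
    push_cast [Complex.ofReal_cos, Complex.ofReal_sin] at hx' hy' ⊢
    linear_combination Complex.I * (lam : ℂ) * hx' + Complex.I * κ * hy'
  rw [hker]
  have hmain := (besselJ_hasSum ((k' * ρ : ℝ) : ℂ) t ht).mul_right
    (pwKernel k' k lam (xc - xi) yc yi)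
  have hfun : (fun n : ℤ => besselJ n ((k' * ρ : ℝ) : ℂ) * Complex.exp (Complex.I * n * θ)
      * (pwKernel k' k lam (xc - xi) yc yi * omega lam k' ^ n))
      = fun n : ℤ => besselJ n ((k' * ρ : ℝ) : ℂ) * t ^ n * pwKernel k' k lam (xc - xi) yc yi := by
    funext n
    rw [htdef, mul_zpow]
    have : (Complex.exp (Complex.I * θ)) ^ n = Complex.exp (Complex.I * n * θ) := by
      rw [← Complex.exp_int_mul]
      congr 1
      ring
    rw [this]
    ring
  rw [hfun, mul_comm (pwKernel k' k lam (xc - xi) yc yi)]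
  exact hmain

/-- multipole expansion (ME) of the layered-media potential
Φ⁺(r_i, σ) = Σ_j Q_j′ 𝓘^{k′k}_{00}(x_j′−x_i, y_j′, y_i, σ): with multipole coefficients
α_n = Σ_j Q_j′ J_n(k′ρ_j′) e^{inθ_j′}, under the stated hypotheses,
Φ⁺(r_i, σ) = Σ_{n∈ℤ} α_n 𝓘^{k′k}_{n0}(x_c′−x_i, y_c′, y_i, σ) with absolute convergence. -/
theorem potential_multipole_expansion
    (k k' : ℝ) (hk : 0 < k) (hk' : 0 < k') (σ : ℝ → ℂ) (hσ : Measurable σ)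
    (Ms : ℕ) (Q : Fin Ms → ℂ) (x' y' ρ' θ' : Fin Ms → ℝ)
    (xc' yc' xi yi : ℝ)
    (hρ' : ∀ j, 0 ≤ ρ' j)
    (hx' : ∀ j, x' j - xc' = ρ' j * Real.cos (θ' j))
    (hy' : ∀ j, y' j - yc' = ρ' j * Real.sin (θ' j))
    (hint : ∀ n : ℤ, MeasureTheory.Integrable
      (sommerfeldIntegrand k' k n 0 (xc' - xi) yc' yi σ))
    (hsum : ∀ j, Summable (fun n : ℤ =>
      ‖besselJ n ((k' * ρ' j : ℝ) : ℂ)‖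
        * ∫ lam : ℝ, ‖sommerfeldIntegrand k' k n 0 (xc' - xi) yc' yi σ lam‖)) :
    Summable (fun n : ℤ =>
      ‖(∑ j, Q j * besselJ n ((k' * ρ' j : ℝ) : ℂ)
          * Complex.exp (Complex.I * (n : ℂ) * (θ' j : ℂ)))
        * sommerfeld k' k n 0 (xc' - xi) yc' yi σ‖) ∧
    (∑ j, Q j * sommerfeld k' k 0 0 (x' j - xi) (y' j) yi σ)
      = ∑' n : ℤ, (∑ j, Q j * besselJ n ((k' * ρ' j : ℝ) : ℂ)
          * Complex.exp (Complex.I * (n : ℂ) * (θ' j : ℂ)))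
        * sommerfeld k' k n 0 (xc' - xi) yc' yi σ := by
  classical
  set G : ℤ → ℝ → ℂ := fun n lam => sommerfeldIntegrand k' k n 0 (xc' - xi) yc' yi σ lam
    with hGdef
  set c : Fin Ms → ℤ → ℂ := fun j n =>
    besselJ n ((k' * ρ' j : ℝ) : ℂ) * Complex.exp (Complex.I * n * θ' j) with hcdef
  have hpt : ∀ j (lam : ℝ), HasSum (fun n : ℤ => c j n * G n lam)
      (sommerfeldIntegrand k' k 0 0 (x' j - xi) (y' j) yi σ lam) := by
    intro j lam
    have h := (kernel_hasSum k k' lam hk' (ρ' j) (θ' j) (x' j) (y' j) xc' yc' xi yi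
      (hx' j) (hy' j)).mul_right (σ lam)
    have hfun : (fun n : ℤ => besselJ n ((k' * ρ' j : ℝ) : ℂ)
          * Complex.exp (Complex.I * n * θ' j)
          * (pwKernel k' k lam (xc' - xi) yc' yi * omega lam k' ^ n) * σ lam)
        = fun n : ℤ => c j n * G n lam := by
      funext n
      simp only [hcdef, hGdef, sommerfeldIntegrand, zpow_zero]
      ring
    rw [hfun] at h
    convert h using 1
    · rfl
    simp only [sommerfeldIntegrand, zpow_zero]
    ring
  have hcnorm : ∀ j n, ‖c j n‖ = ‖besselJ n ((k' * ρ' j : ℝ) : ℂ)‖ := by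
    intro j n
    simp only [hcdef, norm_mul, Complex.norm_exp]
    have : (Complex.I * n * (θ' j : ℂ)).re = 0 := by simp
    rw [this, Real.exp_zero, mul_one]
  have hIj : ∀ (j : Fin Ms) (n : ℤ), Integrable (fun lam => c j n * G n lam) :=
    fun j n => (hint n).const_mul _
  have hNj : ∀ j, Summable (fun n : ℤ => ∫ lam, ‖c j n * G n lam‖) := by
    intro j
    have heq : (fun n : ℤ => ∫ lam, ‖c j n * G n lam‖)
        = fun n : ℤ => ‖besselJ n ((k' * ρ' j : ℝ) : ℂ)‖
          * ∫ lam, ‖G n lam‖ := by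
      funext n
      simp only [norm_mul, hcnorm j n]
      rw [MeasureTheory.integral_const_mul]
    rw [heq]
    exact hsum j
  have hj : ∀ j, HasSum (fun n : ℤ => c j n * sommerfeld k' k n 0 (xc' - xi) yc' yi σ)
      (sommerfeld k' k 0 0 (x' j - xi) (y' j) yi σ) := by
    intro j
    have h := hasSum_integral_of_summable_integral_norm (hIj j) (hNj j)
    have h1 : (fun n : ℤ => ∫ lam, c j n * G n lam)
        = fun n : ℤ => c j n * sommerfeld k' k n 0 (xc' - xi) yc' yi σ := by
      funext n
      rw [MeasureTheory.integral_const_mul]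
      rfl
    have h2 : (∫ lam, ∑' n : ℤ, c j n * G n lam)
        = sommerfeld k' k 0 0 (x' j - xi) (y' j) yi σ := by
      rw [sommerfeld]
      congr 1
      funext lam
      exact (hpt j lam).tsum_eq
    rwa [h1, h2] at h
  have hSn : ∀ n : ℤ, ‖sommerfeld k' k n 0 (xc' - xi) yc' yi σ‖
      ≤ ∫ lam, ‖G n lam‖ := by
    intro n
    rw [sommerfeld]
    refine (norm_integral_le_integral_norm _).trans_eq ?_
    rfl
  constructor
  · have hS2 : Summable (fun n : ℤ => ∑ j, ‖Q j‖
        * (‖besselJ n ((k' * ρ' j : ℝ) : ℂ)‖ * ∫ lam, ‖G n lam‖)) :=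
      summable_sum (fun j _ => ((hsum j).mul_left ‖Q j‖))
    refine Summable.of_nonneg_of_le (fun n => norm_nonneg _) (fun n => ?_) hS2
    rw [norm_mul]
    have h1 : ‖∑ j, Q j * besselJ n ((k' * ρ' j : ℝ) : ℂ)
        * Complex.exp (Complex.I * (n : ℂ) * (θ' j : ℂ))‖ ≤ ∑ j, ‖Q j‖
        * ‖besselJ n ((k' * ρ' j : ℝ) : ℂ)‖ := by
      refine (norm_sum_le _ _).trans (Finset.sum_le_sum (fun j _ => ?_))
      have : Q j * besselJ n ((k' * ρ' j : ℝ) : ℂ)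
          * Complex.exp (Complex.I * (n : ℂ) * (θ' j : ℂ)) = Q j * c j n := by
        rw [hcdef]; ring
      rw [this, norm_mul, hcnorm j n]
    calc ‖∑ j, Q j * besselJ n ((k' * ρ' j : ℝ) : ℂ)
          * Complex.exp (Complex.I * (n : ℂ) * (θ' j : ℂ))‖
          * ‖sommerfeld k' k n 0 (xc' - xi) yc' yi σ‖
        ≤ (∑ j, ‖Q j‖ * ‖besselJ n ((k' * ρ' j : ℝ) : ℂ)‖)
          * ∫ lam, ‖G n lam‖ := by
          refine mul_le_mul h1 (hSn n) (norm_nonneg _) ?_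
          exact Finset.sum_nonneg fun j _ => by positivity
      _ = ∑ j, ‖Q j‖ * (‖besselJ n ((k' * ρ' j : ℝ) : ℂ)‖
            * ∫ lam, ‖G n lam‖) := by
          rw [Finset.sum_mul]
          exact Finset.sum_congr rfl fun j _ => by ring
  · have hfin : ∀ j, Q j * sommerfeld k' k 0 0 (x' j - xi) (y' j) yi σ
        = ∑' n : ℤ, Q j * (c j n * sommerfeld k' k n 0 (xc' - xi) yc' yi σ) := by
      intro j
      rw [← (hj j).tsum_eq, ← tsum_mul_left]
    calc (∑ j, Q j * sommerfeld k' k 0 0 (x' j - xi) (y' j) yi σ)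
        = ∑ j, ∑' n : ℤ, Q j * (c j n * sommerfeld k' k n 0 (xc' - xi) yc' yi σ) :=
          Finset.sum_congr rfl fun j _ => hfin j
      _ = ∑' n : ℤ, ∑ j, Q j * (c j n * sommerfeld k' k n 0 (xc' - xi) yc' yi σ) :=
          (Summable.tsum_finsetSum (fun j _ => ((hj j).summable.mul_left (Q j)))).symm
      _ = ∑' n : ℤ, (∑ j, Q j * besselJ n ((k' * ρ' j : ℝ) : ℂ)
            * Complex.exp (Complex.I * (n : ℂ) * (θ' j : ℂ)))
          * sommerfeld k' k n 0 (xc' - xi) yc' yi σ := by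
          refine tsum_congr fun n => ?_
          rw [Finset.sum_mul]
          exact Finset.sum_congr rfl fun j _ => by rw [hcdef]; ring
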